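/- Let y : [a,b] → ℝⁿ solve y'(t) = A(t)y(t) with A continuous, let W be an invertible n×n real matrix, and suppose that for some χ > 0 the matrix WᵀWA(t) + A(t)ᵀWᵀW + 2χ·WᵀW is negative semi-definite for all t ∈ [a,b]. Then with the norm |y|_W := ‖W y‖₂, for all a ≤ t₁ ≤ t₂ ≤ b we have |y(t₂)|_W ≤ |y(t₁)|_W · exp(−χ(t₂ − t₁)). -/

import Mathlib

open Matrix Set

/-!
Along a solution, `g(t) = |y(t)|_W²` has derivative `2 ⟨W y, W A y⟩ = yᵀ(WᵀWA + AᵀWᵀW)y`, which the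
hypothesis bounds by `-2χ g(t)`. Grönwall's inequality then gives `g(t₂) ≤ g(t₁) e^{-2χ(t₂-t₁)}`,
and taking square roots gives the claim.
-/

namespace Matrix

variable {m n R : Type*} [Fintype m] [Fintype n] [CommSemiring R]

theorem dotProduct_transpose_mul_mulVec {k : Type*} [Fintype k] (W : Matrix m n R)
    (M : Matrix m k R) (v : n → R) (w : k → R) :
    v ⬝ᵥ (Wᵀ * M) *ᵥ w = W *ᵥ v ⬝ᵥ M *ᵥ w := by
  rw [← mulVec_mulVec, dotProduct_mulVec, vecMul_transpose]

theorem dotProduct_lyapunov_mulVec_self (W : Matrix m n R) (B : Matrix n n R) (c : R)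
    (v : n → R) :
    v ⬝ᵥ (Wᵀ * W * B + Bᵀ * Wᵀ * W + c • (Wᵀ * W)) *ᵥ v =
      2 * (W *ᵥ v ⬝ᵥ W *ᵥ (B *ᵥ v)) + c * (W *ᵥ v ⬝ᵥ W *ᵥ v) := by
  have h₁ : v ⬝ᵥ (Wᵀ * W * B) *ᵥ v = W *ᵥ v ⬝ᵥ W *ᵥ (B *ᵥ v) := by
    rw [Matrix.mul_assoc, dotProduct_transpose_mul_mulVec, mulVec_mulVec]
  have h₂ : v ⬝ᵥ (Bᵀ * Wᵀ * W) *ᵥ v = W *ᵥ v ⬝ᵥ W *ᵥ (B *ᵥ v) := by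
    rw [← transpose_mul, dotProduct_transpose_mul_mulVec, dotProduct_comm, mulVec_mulVec]
  rw [add_mulVec, add_mulVec, smul_mulVec, dotProduct_add, dotProduct_add, dotProduct_smul,
    smul_eq_mul, h₁, h₂, dotProduct_transpose_mul_mulVec]
  ring

end Matrix

section Calculus

variable {ι : Type*} [Fintype ι] {u : ℝ → ι → ℝ} {u' : ι → ℝ} {t : ℝ}

theorem HasDerivAt.matrix_mulVec {κ : Type*} [Fintype κ] (M : Matrix κ ι ℝ)
    (hu : HasDerivAt u u' t) : HasDerivAt (fun s => M *ᵥ u s) (M *ᵥ u') t :=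
  (Matrix.mulVecLin M).toContinuousLinearMap.hasFDerivAt.comp_hasDerivAt t hu

theorem HasDerivAt.dotProduct_self (hu : HasDerivAt u u' t) :
    HasDerivAt (fun s => u s ⬝ᵥ u s) (2 * (u t ⬝ᵥ u')) t := by
  refine (HasDerivAt.fun_sum fun i _ =>
    (hasDerivAt_pi.mp hu i).mul (hasDerivAt_pi.mp hu i)).congr_deriv ?_
  simp only [dotProduct, Finset.mul_sum]
  exact Finset.sum_congr rfl fun i _ => by ring

end Calculus

theorem le_mul_exp_of_hasDerivWithinAt_le_mul {f f' : ℝ → ℝ} {K a b : ℝ} (hab : a ≤ b)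
    (hf : ContinuousOn f (Icc a b)) (hf' : ∀ x ∈ Ico a b, HasDerivWithinAt f (f' x) (Ici x) x)
    (bound : ∀ x ∈ Ico a b, f' x ≤ K * f x) : f b ≤ f a * Real.exp (K * (b - a)) := by
  have := le_gronwallBound_of_liminf_deriv_right_le hf
    (fun x hx _ hr => (hf' x hx).liminf_right_slope_le hr) le_rfl
    (fun x hx => (add_zero (K * f x)).symm ▸ bound x hx) b ⟨hab, le_rfl⟩
  rwa [gronwallBound_ε0] at this

theorem mulVec_dotProduct_mulVec_le_mul_exp_of_lyapunov {ι κ : Type*} [Fintype ι] [Fintype κ]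
    {a b χ : ℝ} {A : ℝ → Matrix ι ι ℝ} {W : Matrix κ ι ℝ} {y : ℝ → ι → ℝ} (hab : a ≤ b)
    (hy : ∀ t ∈ Icc a b, HasDerivAt y (A t *ᵥ y t) t)
    (hneg : ∀ t ∈ Icc a b,
      y t ⬝ᵥ (Wᵀ * W * A t + (A t)ᵀ * Wᵀ * W + (2 * χ) • (Wᵀ * W)) *ᵥ y t ≤ 0) :
    W *ᵥ y b ⬝ᵥ W *ᵥ y b ≤ (W *ᵥ y a ⬝ᵥ W *ᵥ y a) * Real.exp (-(2 * χ) * (b - a)) := by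
  have hg : ∀ t ∈ Icc a b, HasDerivAt (fun s => W *ᵥ y s ⬝ᵥ W *ᵥ y s)
      (2 * (W *ᵥ y t ⬝ᵥ W *ᵥ (A t *ᵥ y t))) t := fun t ht =>
    ((hy t ht).matrix_mulVec W).dotProduct_self
  refine le_mul_exp_of_hasDerivWithinAt_le_mul hab
    (fun t ht => (hg t ht).continuousAt.continuousWithinAt)
    (fun t ht => (hg t (Ico_subset_Icc_self ht)).hasDerivWithinAt) fun t ht => ?_
  have hneg_t := hneg t (Ico_subset_Icc_self ht)
  rw [dotProduct_lyapunov_mulVec_self] at hneg_t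
  linarith

theorem stmt_4_general {n : ℕ} (a b χ : ℝ)
    (A : ℝ → Matrix (Fin n) (Fin n) ℝ)
    (W : Matrix (Fin n) (Fin n) ℝ)
    (y : ℝ → Fin n → ℝ)
    (hy : ∀ t ∈ Icc a b, HasDerivAt y ((A t).mulVec (y t)) t)
    (hneg : ∀ t ∈ Icc a b, ∀ v : Fin n → ℝ,
      v ⬝ᵥ ((Wᵀ * W * A t + (A t)ᵀ * Wᵀ * W + (2 * χ) • (Wᵀ * W)).mulVec v) ≤ 0) :
    ∀ t₁ ∈ Icc a b, ∀ t₂ ∈ Icc a b, t₁ ≤ t₂ →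
      Real.sqrt (W.mulVec (y t₂) ⬝ᵥ W.mulVec (y t₂)) ≤
        Real.sqrt (W.mulVec (y t₁) ⬝ᵥ W.mulVec (y t₁)) * Real.exp (-χ * (t₂ - t₁)) := by
  intro t₁ ht₁ t₂ ht₂ h12
  have hsub : Icc t₁ t₂ ⊆ Icc a b := Icc_subset_Icc ht₁.1 ht₂.2
  have hsq := mulVec_dotProduct_mulVec_le_mul_exp_of_lyapunov h12
    (fun t ht => hy t (hsub ht)) (fun t ht => hneg t (hsub ht) _)
  calc _ ≤ Real.sqrt ((W *ᵥ y t₁ ⬝ᵥ W *ᵥ y t₁) * Real.exp (-(2 * χ) * (t₂ - t₁))) :=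
        Real.sqrt_le_sqrt hsq
    _ = _ := by
        rw [Real.sqrt_mul' _ (Real.exp_pos _).le, ← Real.exp_half]
        ring_nf

/-- Weighted-norm exponential decay: if `WᵀWA(t) + A(t)ᵀWᵀW + 2χ WᵀW` is negative
semi-definite on `[a,b]`, then `|y|_W := ‖Wy‖₂` decays exponentially along solutions
of `y' = A(t)y`. -/
theorem stmt_4 {n : ℕ} (a b χ : ℝ) (hχ : 0 < χ)
    (A : ℝ → Matrix (Fin n) (Fin n) ℝ) (hA : ContinuousOn A (Icc a b))
    (W : Matrix (Fin n) (Fin n) ℝ) (hW : IsUnit W)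
    (y : ℝ → Fin n → ℝ)
    (hy : ∀ t ∈ Icc a b, HasDerivAt y ((A t).mulVec (y t)) t)
    (hneg : ∀ t ∈ Icc a b, ∀ v : Fin n → ℝ,
      v ⬝ᵥ ((Wᵀ * W * A t + (A t)ᵀ * Wᵀ * W + (2 * χ) • (Wᵀ * W)).mulVec v) ≤ 0) :
    ∀ t₁ ∈ Icc a b, ∀ t₂ ∈ Icc a b, t₁ ≤ t₂ →
      Real.sqrt (W.mulVec (y t₂) ⬝ᵥ W.mulVec (y t₂)) ≤
        Real.sqrt (W.mulVec (y t₁) ⬝ᵥ W.mulVec (y t₁)) * Real.exp (-χ * (t₂ - t₁)) :=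
  stmt_4_general a b χ A W y hy hneg
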